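/- arXiv:1407.1386 — 2 statements merged into one kernel-verified Lean document; each statement's English description precedes it below -/
import Mathlib

section
/- Let C be either the singleton class {⟨ω,<⟩} or the class of all finite linear orders. Then for every bimodal formula φ: φ is satisfied in some model based on a product of a member of C with a difference frame if and only if the formula □₁⁺□₀⁺(◇₀⊤ → □₁◇₀⊤) ∧ φ is satisfied in some model based on a decreasing 2-frame whose horizontal frame is in C and whose vertical frames are all difference frames (here □ᵢ⁺ψ := ψ ∧ □ᵢψ). -/
namespace HK

/-! ## Bimodal formulas -/

/-- Bimodal formulas: `φ ::= P | ¬φ | φ∧ψ | ◇₀φ | ◇₁φ`. -/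
inductive BForm : Type
  | var : ℕ → BForm
  | neg : BForm → BForm
  | and : BForm → BForm → BForm
  | dia0 : BForm → BForm
  | dia1 : BForm → BForm

namespace BForm

def imp (φ ψ : BForm) : BForm := neg (and φ (neg ψ))
def bot : BForm := and (var 0) (neg (var 0))
def top : BForm := neg bot
def box0 (φ : BForm) : BForm := neg (dia0 (neg φ))
def box1 (φ : BForm) : BForm := neg (dia1 (neg φ))
/-- `□₀⁺φ := φ ∧ □₀φ` -/
def boxP0 (φ : BForm) : BForm := and φ (box0 φ)
/-- `□₁⁺φ := φ ∧ □₁φ` -/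
def boxP1 (φ : BForm) : BForm := and φ (box1 φ)

/-- Modal nesting depth. -/
def depth : BForm → ℕ
  | var _ => 0
  | neg φ => depth φ
  | and φ ψ => max (depth φ) (depth ψ)
  | dia0 φ => depth φ + 1
  | dia1 φ => depth φ + 1

/-- The propositional variable `k` occurs in the formula. -/
def Occurs (k : ℕ) : BForm → Prop
  | var n => k = n
  | neg φ => Occurs k φ
  | and φ ψ => Occurs k φ ∨ Occurs k ψ
  | dia0 φ => Occurs k φ
  | dia1 φ => Occurs k φ

/-- The formula uses only the modal operator `◇₀`. -/
def OnlyDia0 : BForm → Prop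
  | var _ => True
  | neg φ => OnlyDia0 φ
  | and φ ψ => OnlyDia0 φ ∧ OnlyDia0 ψ
  | dia0 φ => OnlyDia0 φ
  | dia1 _ => False

/-- The formula uses only the modal operator `◇₁`. -/
def OnlyDia1 : BForm → Prop
  | var _ => True
  | neg φ => OnlyDia1 φ
  | and φ ψ => OnlyDia1 φ ∧ OnlyDia1 ψ
  | dia0 _ => False
  | dia1 φ => OnlyDia1 φ

/-- Relativisation `φ^D` of each diamond to the variable `d`:
each subformula `◇ᵢψ` is replaced by `◇ᵢ(D ∧ ψ^D)`. -/
def relativize (d : ℕ) : BForm → BForm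
  | var n => var n
  | neg φ => neg (relativize d φ)
  | and φ ψ => and (relativize d φ) (relativize d ψ)
  | dia0 φ => dia0 (and (var d) (relativize d φ))
  | dia1 φ => dia1 (and (var d) (relativize d φ))

/-- `□₀^k φ` -/
def iterBox0 : ℕ → BForm → BForm
  | 0, φ => φ
  | n+1, φ => box0 (iterBox0 n φ)

/-- `□₁^k φ` -/
def iterBox1 : ℕ → BForm → BForm
  | 0, φ => φ
  | n+1, φ => box1 (iterBox1 n φ)

/-- `□₀^{≤n} φ := ⋀_{k ≤ n} □₀^k φ` -/
def boxLe0 : ℕ → BForm → BForm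
  | 0, φ => φ
  | n+1, φ => and (boxLe0 n φ) (iterBox0 (n+1) φ)

/-- `□₁^{≤n} φ := ⋀_{k ≤ n} □₁^k φ` -/
def boxLe1 : ℕ → BForm → BForm
  | 0, φ => φ
  | n+1, φ => and (boxLe1 n φ) (iterBox1 (n+1) φ)

/-- Uniform substitution. -/
def subst (s : ℕ → BForm) : BForm → BForm
  | var n => s n
  | neg φ => neg (subst s φ)
  | and φ ψ => and (subst s φ) (subst s ψ)
  | dia0 φ => dia0 (subst s φ)
  | dia1 φ => dia1 (subst s φ)

end BForm

/-- Kripke truth over a 2-frame `⟨W, R0, R1⟩` with valuation `val`. -/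
def BSat {W : Type} (R0 R1 : W → W → Prop) (val : ℕ → W → Prop) : W → BForm → Prop
  | w, .var n => val n w
  | w, .neg φ => ¬ BSat R0 R1 val w φ
  | w, .and φ ψ => BSat R0 R1 val w φ ∧ BSat R0 R1 val w ψ
  | w, .dia0 φ => ∃ v, R0 w v ∧ BSat R0 R1 val v φ
  | w, .dia1 φ => ∃ v, R1 w v ∧ BSat R0 R1 val v φ

/-! ## Frames -/

/-- A (unimodal) frame: a nonempty set with a binary relation. -/
structure Frame : Type 1 where
  W : Type
  R : W → W → Prop
  ne : Nonempty W

/-- A 2-frame: a nonempty set with two binary relations. -/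
structure Frame2 : Type 1 where
  W : Type
  R0 : W → W → Prop
  R1 : W → W → Prop
  ne : Nonempty W

/-- Validity of a bimodal formula in a 2-frame. -/
def Frame2.Valid (F : Frame2) (φ : BForm) : Prop :=
  ∀ (val : ℕ → F.W → Prop) (w : F.W), BSat F.R0 F.R1 val w φ

/-- Satisfaction of a bimodal formula in some model based on the 2-frame. -/
def Frame2.Sat (F : Frame2) (φ : BForm) : Prop :=
  ∃ (val : ℕ → F.W → Prop) (w : F.W), BSat F.R0 F.R1 val w φ

/-- Horizontal relation of a product frame. -/
def prodR0 {A B : Type} (R : A → A → Prop) : A × B → A × B → Prop :=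
  fun p q => R p.1 q.1 ∧ p.2 = q.2

/-- Vertical relation of a product frame. -/
def prodR1 {A B : Type} (S : B → B → Prop) : A × B → A × B → Prop :=
  fun p q => p.1 = q.1 ∧ S p.2 q.2

/-- `φ` is satisfied in some model based on the product frame `⟨A,R⟩ × ⟨B,S⟩`. -/
def ProdSat {A B : Type} (R : A → A → Prop) (S : B → B → Prop) (φ : BForm) : Prop :=
  ∃ (val : ℕ → A × B → Prop) (w : A × B), BSat (prodR0 R) (prodR1 S) val w φ

/-- `φ` is valid in the product frame `⟨A,R⟩ × ⟨B,S⟩`. -/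
def ProdValid {A B : Type} (R : A → A → Prop) (S : B → B → Prop) (φ : BForm) : Prop :=
  ∀ (val : ℕ → A × B → Prop) (w : A × B), BSat (prodR0 R) (prodR1 S) val w φ

/-- The product 2-frame of two frames. -/
def prodFrame2 (A B : Type) [Nonempty A] [Nonempty B]
    (R : A → A → Prop) (S : B → B → Prop) : Frame2 :=
  ⟨A × B, prodR0 R, prodR1 S, inferInstance⟩

/-- Linear order: irreflexive, transitive and trichotomous. -/
def IsLin {T : Type} (R : T → T → Prop) : Prop :=
  (∀ x, ¬ R x x) ∧ (∀ x y z, R x y → R y z → R x z) ∧ (∀ x y, R x y ∨ x = y ∨ R y x)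

/-- Weak order: transitive and weakly connected. -/
def WeakOrd {T : Type} (R : T → T → Prop) : Prop :=
  (∀ x y z, R x y → R y z → R x z) ∧ (∀ x y z, R x y → R x z → y = z ∨ R y z ∨ R z y)

/-- Modal discreteness. -/
def ModallyDiscrete {T : Type} (R : T → T → Prop) : Prop :=
  ¬ ∃ (x : ℕ → T) (xω : T), (∀ i, R (x i) (x (i+1))) ∧ (∀ i, x i ≠ x (i+1)) ∧
      (∀ i, R (x i) xω) ∧ (∀ i, ¬ R xω (x i))

/-- No infinite ascending chains of distinct points. -/
def Noetherian {T : Type} (R : T → T → Prop) : Prop :=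
  ¬ ∃ x : ℕ → T, (∀ i, R (x i) (x (i+1))) ∧ (∀ i, x i ≠ x (i+1))

/-- The frame is (isomorphic to) `⟨ω,<⟩`. -/
def IsOmegaFrame (F : Frame) : Prop :=
  ∃ e : F.W ≃ ℕ, ∀ a b, F.R a b ↔ e a < e b

/-- The frame is a finite linear order. -/
def IsFinLinFrame (F : Frame) : Prop := Finite F.W ∧ IsLin F.R

/-- `F` contains an `⟨ω+1,>⟩`-type chain: distinct points `x₀,…,x_n,…,x_ω` with
`x_n R x_m` iff `n > m` (for `n ≠ m`). -/
def HasOmegaPlusOneChain (F : Frame) : Prop :=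
  ∃ (x : ℕ → F.W) (xω : F.W), Function.Injective x ∧ (∀ n, x n ≠ xω) ∧
    (∀ n m, n ≠ m → (F.R (x n) (x m) ↔ m < n)) ∧
    (∀ n, F.R xω (x n)) ∧ (∀ n, ¬ F.R (x n) xω)

/-! ## Two-dimensional (expanding/decreasing) 2-frames `H_{F,Ḡ}` -/

/-- A 2-frame `H_{F,Ḡ}` built from a horizontal frame `⟨H,R⟩` and, for each `x : H`,
a vertical frame `G_x = ⟨D x, S x⟩` carved out of a common ambient type `V`. -/
structure TwoFrame : Type 1 where
  H : Type
  R : H → H → Prop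
  Hne : Nonempty H
  V : Type
  D : H → Set V
  S : H → V → V → Prop
  Dne : ∀ x, (D x).Nonempty

namespace TwoFrame

/-- The horizontal frame. -/
def horiz (T : TwoFrame) : Frame := ⟨T.H, T.R, T.Hne⟩

/-- The vertical frame `G_x` at `x`. -/
def fiber (T : TwoFrame) (x : T.H) : Frame :=
  ⟨{a : T.V // a ∈ T.D x}, fun a b => T.S x a.1 b.1,
    Exists.elim (T.Dne x) (fun a ha => ⟨⟨a, ha⟩⟩)⟩

/-- The worlds `{⟨u,v⟩ : u ∈ H, v ∈ D u}`. -/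
def Worlds (T : TwoFrame) : Type := {p : T.H × T.V // p.2 ∈ T.D p.1}

/-- Horizontal relation of `H_{F,Ḡ}`. -/
def Rh (T : TwoFrame) : T.Worlds → T.Worlds → Prop :=
  fun p q => T.R p.1.1 q.1.1 ∧ p.1.2 = q.1.2

/-- Vertical relation of `H_{F,Ḡ}`. -/
def Rv (T : TwoFrame) : T.Worlds → T.Worlds → Prop :=
  fun p q => p.1.1 = q.1.1 ∧ T.S p.1.1 p.1.2 q.1.2

/-- `φ` is satisfied in some model based on `H_{F,Ḡ}`. -/
def Sat (T : TwoFrame) (φ : BForm) : Prop :=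
  ∃ (val : ℕ → T.Worlds → Prop) (w : T.Worlds), BSat T.Rh T.Rv val w φ

/-- Decreasing 2-frame: `G_y` is a subframe of `G_x` whenever `x R y`. -/
def Decreasing (T : TwoFrame) : Prop :=
  ∀ x y, T.R x y → T.D y ⊆ T.D x ∧ ∀ a ∈ T.D y, ∀ b ∈ T.D y, (T.S y a b ↔ T.S x a b)

/-- Expanding 2-frame: `G_x` is a subframe of `G_y` whenever `x R y`. -/
def Expanding (T : TwoFrame) : Prop :=
  ∀ x y, T.R x y → T.D x ⊆ T.D y ∧ ∀ a ∈ T.D x, ∀ b ∈ T.D x, (T.S x a b ↔ T.S y a b)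

/-- All vertical frames are difference frames. -/
def DiffFibers (T : TwoFrame) : Prop :=
  ∀ x, ∀ a ∈ T.D x, ∀ b ∈ T.D x, (T.S x a b ↔ a ≠ b)

end TwoFrame

/-- `φ` is satisfied in some model based on a product of a member of `C`
with a difference frame. -/
def ProdDiffSat (C : Frame → Prop) (φ : BForm) : Prop :=
  ∃ F : Frame, C F ∧ ∃ D : Type, Nonempty D ∧ ProdSat F.R (fun a b : D => a ≠ b) φ

/-- `φ` is satisfied in some model based on a decreasing 2-frame with horizontal
frame in `C` and all vertical frames difference frames. -/
def DecDiffSat (C : Frame → Prop) (φ : BForm) : Prop :=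
  ∃ T : TwoFrame, C T.horiz ∧ T.Decreasing ∧ T.DiffFibers ∧ T.Sat φ

/-- `φ` is satisfied in some model based on an expanding 2-frame with horizontal
frame in `C` and all vertical frames difference frames. -/
def ExpDiffSat (C : Frame → Prop) (φ : BForm) : Prop :=
  ∃ T : TwoFrame, C T.horiz ∧ T.Expanding ∧ T.DiffFibers ∧ T.Sat φ

/-- `φ` is satisfied in some model based on a product of a member of `C0` with a
member of `C1`. -/
def ProdClassSat (C0 C1 : Frame → Prop) (φ : BForm) : Prop :=
  ∃ F0, C0 F0 ∧ ∃ F1, C1 F1 ∧ ProdSat F0.R F1.R φ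

/-- `φ` is satisfied in some model based on a decreasing 2-frame with horizontal
frame in `C0` and all vertical frames in `C1`. -/
def DecClassSat (C0 C1 : Frame → Prop) (φ : BForm) : Prop :=
  ∃ T : TwoFrame, C0 T.horiz ∧ (∀ x, C1 (T.fiber x)) ∧ T.Decreasing ∧ T.Sat φ

/-- `φ` is satisfied in some model based on an expanding 2-frame with horizontal
frame in `C0` and all vertical frames in `C1`. -/
def ExpClassSat (C0 C1 : Frame → Prop) (φ : BForm) : Prop :=
  ∃ T : TwoFrame, C0 T.horiz ∧ (∀ x, C1 (T.fiber x)) ∧ T.Expanding ∧ T.Sat φ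

/-- Satisfiability over products of `⟨ω,<⟩` with difference frames. -/
def OmegaDiffSat (φ : BForm) : Prop :=
  ∃ D : Type, Nonempty D ∧ ProdSat (fun m n : ℕ => m < n) (fun a b : D => a ≠ b) φ

/-- Satisfiability over products of finite linear orders with difference frames. -/
def FinLinDiffSat (φ : BForm) : Prop :=
  ∃ (T : Type) (R : T → T → Prop), Finite T ∧ IsLin R ∧
    ∃ D : Type, Nonempty D ∧ ProdSat R (fun a b : D => a ≠ b) φ

/-! ## Bimodal logics -/

/-- Propositional tautology (diamond formulas treated as atoms). -/
def IsTaut (φ : BForm) : Prop :=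
  ∀ v : BForm → Prop, (∀ ψ, v (BForm.neg ψ) ↔ ¬ v ψ) →
    (∀ ψ χ, v (BForm.and ψ χ) ↔ v ψ ∧ v χ) → v φ

/-- Normal bimodal logic. -/
structure IsLogic (L : Set BForm) : Prop where
  taut : ∀ φ, IsTaut φ → φ ∈ L
  K0 : BForm.imp (BForm.box0 (BForm.imp (BForm.var 0) (BForm.var 1)))
        (BForm.imp (BForm.box0 (BForm.var 0)) (BForm.box0 (BForm.var 1))) ∈ L
  K1 : BForm.imp (BForm.box1 (BForm.imp (BForm.var 0) (BForm.var 1)))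
        (BForm.imp (BForm.box1 (BForm.var 0)) (BForm.box1 (BForm.var 1))) ∈ L
  mp : ∀ φ ψ, BForm.imp φ ψ ∈ L → φ ∈ L → ψ ∈ L
  subst : ∀ φ s, φ ∈ L → BForm.subst s φ ∈ L
  nec0 : ∀ φ, φ ∈ L → BForm.box0 φ ∈ L
  nec1 : ∀ φ, φ ∈ L → BForm.box1 φ ∈ L

/-- Validity of a (◇₀-)formula in a unimodal frame `⟨W,R⟩`. -/
def UValid0 {W : Type} (R : W → W → Prop) (φ : BForm) : Prop :=
  ∀ (val : ℕ → W → Prop) (w : W), BSat R (fun _ _ => False) val w φ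

/-- Validity of a (◇₁-)formula in a unimodal frame `⟨W,S⟩`. -/
def UValid1 {W : Type} (S : W → W → Prop) (φ : BForm) : Prop :=
  ∀ (val : ℕ → W → Prop) (w : W), BSat (fun _ _ => False) S val w φ

/-- `K4.3`: the unimodal logic (in `◇₀`) of all linear orders. -/
def K43 : Set BForm :=
  {φ | φ.OnlyDia0 ∧ ∀ (T : Type) (R : T → T → Prop), Nonempty T → IsLin R → UValid0 R φ}

/-- `Diff`: the unimodal logic (in `◇₁`) of all difference frames. -/
def DiffLogic : Set BForm :=
  {φ | φ.OnlyDia1 ∧ ∀ (D : Type), Nonempty D → UValid1 (fun a b : D => a ≠ b) φ}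

/-- `Log⟨ω,<⟩`: the unimodal logic (in `◇₀`) of the frame `⟨ω,<⟩`. -/
def LogOmega : Set BForm :=
  {φ | φ.OnlyDia0 ∧ UValid0 (fun m n : ℕ => m < n) φ}

/-- `GL.3`: the unimodal logic (in `◇₀`) of all Noetherian irreflexive linear orders. -/
def GL3 : Set BForm :=
  {φ | φ.OnlyDia0 ∧
    ∀ (T : Type) (R : T → T → Prop), Nonempty T → IsLin R → Noetherian R → UValid0 R φ}

/-- `DisK4.3`: the unimodal logic (in `◇₀`) of all modally discrete weak orders. -/
def DisK43 : Set BForm :=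
  {φ | φ.OnlyDia0 ∧
    ∀ (T : Type) (R : T → T → Prop), Nonempty T → WeakOrd R → ModallyDiscrete R → UValid0 R φ}

def commAx1 : BForm :=
  BForm.imp (BForm.box1 (BForm.box0 (BForm.var 0))) (BForm.box0 (BForm.box1 (BForm.var 0)))
def commAx2 : BForm :=
  BForm.imp (BForm.box0 (BForm.box1 (BForm.var 0))) (BForm.box1 (BForm.box0 (BForm.var 0)))
def commAx3 : BForm :=
  BForm.imp (BForm.dia0 (BForm.box1 (BForm.var 0))) (BForm.box1 (BForm.dia0 (BForm.var 0)))

/-- The commutator `[L0,L1]`: the smallest bimodal logic containing `L0`, `L1` (and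
hence their fusion) together with the commutativity/confluence axioms. -/
def Commutator (L0 L1 : Set BForm) : Set BForm :=
  ⋂₀ {L : Set BForm | IsLogic L ∧ L0 ⊆ L ∧ L1 ⊆ L ∧
      commAx1 ∈ L ∧ commAx2 ∈ L ∧ commAx3 ∈ L}

/-- The product logic `L0 × L1`: the logic of all products of a frame for `L0`
with a frame for `L1`. -/
def ProdLogic (L0 L1 : Set BForm) : Set BForm :=
  {φ | ∀ (A B : Type), Nonempty A → Nonempty B → ∀ (R : A → A → Prop) (S : B → B → Prop),
      (∀ ψ ∈ L0, UValid0 R ψ) → (∀ ψ ∈ L1, UValid1 S ψ) → ProdValid R S φ}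

/-- The logic of a class of 2-frames. -/
def LogOf (C : Frame2 → Prop) : Set BForm := {φ | ∀ F, C F → F.Valid φ}

/-- Kripke completeness of a bimodal logic. -/
def KripkeComplete (L : Set BForm) : Prop := ∃ C : Frame2 → Prop, L = LogOf C

/-- `L`-satisfiability: `φ` is satisfied in some model `M` with `M ⊨ L`. -/
def LSat (L : Set BForm) (φ : BForm) : Prop :=
  ∃ (W : Type) (_ : Nonempty W) (R0 R1 : W → W → Prop) (val : ℕ → W → Prop),
    (∀ ψ ∈ L, ∀ w, BSat R0 R1 val w ψ) ∧ ∃ w, BSat R0 R1 val w φ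

/-! ## One-variable first-order temporal logic with counting (FOLTL≠) -/

/-- FOLTL≠-formulas: `φ ::= P(x) | ¬φ | φ∧ψ | ◇_F φ | ∃≠x φ`. -/
inductive TForm : Type
  | atom : ℕ → TForm
  | neg : TForm → TForm
  | and : TForm → TForm → TForm
  | diaF : TForm → TForm
  | exNe : TForm → TForm

/-- Truth of an FOLTL≠-formula in a first-order temporal model based on the
timeline `⟨T,lt⟩` with domains `D` and interpretation `I`. -/
def TSat {T U : Type} (lt : T → T → Prop) (D : T → Set U) (I : ℕ → T → U → Prop) :
    T → U → TForm → Prop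
  | t, a, .atom n => I n t a
  | t, a, .neg φ => ¬ TSat lt D I t a φ
  | t, a, .and φ ψ => TSat lt D I t a φ ∧ TSat lt D I t a ψ
  | t, a, .diaF φ => ∃ t', lt t t' ∧ a ∈ D t' ∧ TSat lt D I t' a φ
  | t, a, .exNe φ => ∃ b, b ∈ D t ∧ b ≠ a ∧ TSat lt D I t b φ

/-- The standard translation `⋆` from FOLTL≠-formulas to bimodal formulas. -/
def TForm.star : TForm → BForm
  | .atom n => .var n
  | .neg φ => .neg (TForm.star φ)
  | .and φ ψ => .and (TForm.star φ) (TForm.star ψ)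
  | .diaF φ => .dia0 (TForm.star φ)
  | .exNe φ => .dia1 (TForm.star φ)

/-- Satisfiability in constant domain models over the timeline `⟨T,lt⟩`. -/
def FOLTLConstSat {T : Type} (lt : T → T → Prop) (φ : TForm) : Prop :=
  ∃ (U : Type) (I : ℕ → T → U → Prop) (t : T) (a : U),
    TSat lt (fun _ => (Set.univ : Set U)) I t a φ

/-- Satisfiability in decreasing domain models over the timeline `⟨T,lt⟩`. -/
def FOLTLDecSat {T : Type} (lt : T → T → Prop) (φ : TForm) : Prop :=
  ∃ (U : Type) (D : T → Set U), (∀ t, (D t).Nonempty) ∧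
    (∀ t t', lt t t' → D t' ⊆ D t) ∧
    ∃ (I : ℕ → T → U → Prop) (t : T) (a : U), a ∈ D t ∧ TSat lt D I t a φ

/-- Satisfiability in expanding domain models over the timeline `⟨T,lt⟩`. -/
def FOLTLExpSat {T : Type} (lt : T → T → Prop) (φ : TForm) : Prop :=
  ∃ (U : Type) (D : T → Set U), (∀ t, (D t).Nonempty) ∧
    (∀ t t', lt t t' → D t ⊆ D t') ∧
    ∃ (I : ℕ → T → U → Prop) (t : T) (a : U), a ∈ D t ∧ TSat lt D I t a φ

/-- Satisfiability in constant domain models over a class `C` of timelines. -/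
def FOLTLConstSatC (C : Frame → Prop) (φ : TForm) : Prop :=
  ∃ F, C F ∧ FOLTLConstSat F.R φ

/-- Satisfiability in decreasing domain models over a class `C` of timelines. -/
def FOLTLDecSatC (C : Frame → Prop) (φ : TForm) : Prop :=
  ∃ F, C F ∧ FOLTLDecSat F.R φ

/-- Satisfiability in expanding domain models over a class `C` of timelines. -/
def FOLTLExpSatC (C : Frame → Prop) (φ : TForm) : Prop :=
  ∃ F, C F ∧ FOLTLExpSat F.R φ

/-- The class of all linear orders. -/
def AllLin : Frame → Prop := fun F => IsLin F.R

/-- The class of all finite linear orders. -/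
def AllFinLin : Frame → Prop := IsFinLinFrame

/-! ## Gödel numbering -/

/-- A fixed effective Gödel numbering of bimodal formulas. -/
def encodeB : BForm → ℕ
  | .var n => Nat.pair 0 n
  | .neg φ => Nat.pair 1 (encodeB φ)
  | .and φ ψ => Nat.pair 2 (Nat.pair (encodeB φ) (encodeB ψ))
  | .dia0 φ => Nat.pair 3 (encodeB φ)
  | .dia1 φ => Nat.pair 4 (encodeB φ)

/-- A fixed effective Gödel numbering of FOLTL≠-formulas. -/
def encodeT : TForm → ℕ
  | .atom n => Nat.pair 0 n
  | .neg φ => Nat.pair 1 (encodeT φ)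
  | .and φ ψ => Nat.pair 2 (Nat.pair (encodeT φ) (encodeT ψ))
  | .diaF φ => Nat.pair 3 (encodeT φ)
  | .exNe φ => Nat.pair 4 (encodeT φ)

/-- The set of codes of bimodal formulas with property `P`. -/
def BCodes (P : BForm → Prop) : ℕ → Prop := fun n => ∃ φ, encodeB φ = n ∧ P φ

/-- The set of codes of FOLTL≠-formulas with property `P`. -/
def TCodes (P : TForm → Prop) : ℕ → Prop := fun n => ∃ φ, encodeT φ = n ∧ P φ

/-! ## The analytical hierarchy: Σ₁¹ -/

/-- `A ⊆ ℕ` is `Σ₁¹`: in normal form `n ∈ A ↔ ∃ f : ℕ → ℕ, ∀ m, R (n, f̄(m))`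
for a computable predicate `R` of the number `n` and finite initial segments of `f`. -/
def Sigma11 (A : ℕ → Prop) : Prop :=
  ∃ R : ℕ × List ℕ → Prop, ComputablePred R ∧
    ∀ n, A n ↔ ∃ f : ℕ → ℕ, ∀ m, R (n, (List.range m).map f)

/-- `Σ₁¹`-hardness with respect to computable many-one reducibility. -/
def Sigma11Hard (A : ℕ → Prop) : Prop := ∀ B : ℕ → Prop, Sigma11 B → ManyOneReducible B A

/-- `Σ₁¹`-completeness. -/
def Sigma11Complete (A : ℕ → Prop) : Prop := Sigma11 A ∧ Sigma11Hard A

/-! ## Counter (Minsky) machines -/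

/-- Counter machine operations: `inl i` increments counter `i`, `inr (inl i)`
decrements counter `i`, `inr (inr i)` zero-tests counter `i`. -/
abbrev CMOp : Type := ℕ ⊕ ℕ ⊕ ℕ

def CMOp.counter : CMOp → ℕ
  | Sum.inl i => i
  | Sum.inr (Sum.inl i) => i
  | Sum.inr (Sum.inr i) => i

/-- Description of a counter machine: number `N` of counters, number of states
(states are `0,…,states-1`), list of terminal states, and list of instructions
`(q, op, q')`. -/
abbrev CMDesc : Type := ℕ × ℕ × List ℕ × List (ℕ × CMOp × ℕ)

/-- Well-formedness of a counter machine description: `N > 1`, terminal states are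
states, instructions are attached to non-terminal states and mention genuine
counters, and every non-terminal state has at least one instruction. -/
def CMWF (M : CMDesc) : Prop :=
  1 < M.1 ∧ (∀ q ∈ M.2.2.1, q < M.2.1) ∧
  (∀ t ∈ M.2.2.2, t.1 < M.2.1 ∧ t.1 ∉ M.2.2.1 ∧ t.2.2 < M.2.1 ∧ CMOp.counter t.2.1 < M.1) ∧
  (∀ q, q < M.2.1 → q ∉ M.2.2.1 → ∃ t ∈ M.2.2.2, t.1 = q)

/-- A configuration: current state and contents of the counters. -/
abbrev CMConfig : Type := ℕ × (ℕ → ℕ)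

/-- Reliable step of a counter machine. -/
def CMStep (M : CMDesc) (σ σ' : CMConfig) : Prop :=
  ∃ op q', (σ.1, op, q') ∈ M.2.2.2 ∧ σ'.1 = q' ∧
    match op with
    | Sum.inl i => σ'.2 i = σ.2 i + 1 ∧ ∀ j, j ≠ i → σ'.2 j = σ.2 j
    | Sum.inr (Sum.inl i) => 0 < σ.2 i ∧ σ'.2 i + 1 = σ.2 i ∧ ∀ j, j ≠ i → σ'.2 j = σ.2 j
    | Sum.inr (Sum.inr i) => σ.2 i = 0 ∧ ∀ j, σ'.2 j = σ.2 j

/-- Lossy step of a counter machine. -/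
def CMStepLossy (M : CMDesc) (σ σ' : CMConfig) : Prop :=
  ∃ c1 c2 : ℕ → ℕ, CMStep M (σ.1, c1) (σ'.1, c2) ∧ (∀ i, c1 i ≤ σ.2 i) ∧ (∀ i, σ'.2 i ≤ c2 i)

/-- The configuration `⟨q, 𝟎⟩` with all-0 counters. -/
def zeroConfig (q : ℕ) : CMConfig := (q, fun _ => 0)

/-- CM non-termination: the machine has an infinite run starting with `⟨q₀,𝟎⟩`. -/
def CMNonTerm : CMDesc × ℕ → Prop := fun p =>
  CMWF p.1 ∧ ∃ ρ : ℕ → CMConfig, ρ 0 = zeroConfig p.2 ∧ ∀ n, CMStep p.1 (ρ n) (ρ (n+1))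

/-- CM reachability: the machine has a run starting with `⟨q₀,𝟎⟩` reaching `q_r`. -/
def CMReach : CMDesc × ℕ × ℕ → Prop := fun p =>
  CMWF p.1 ∧ ∃ (B : ℕ) (ρ : ℕ → CMConfig), ρ 0 = zeroConfig p.2.1 ∧
    (∀ n, n < B → CMStep p.1 (ρ n) (ρ (n+1))) ∧ (ρ B).1 = p.2.2

/-- CM recurrence: the machine has an infinite run starting with `⟨q₀,𝟎⟩`
visiting `q_r` infinitely often. -/
def CMRecur : CMDesc × ℕ × ℕ → Prop := fun p =>
  CMWF p.1 ∧ ∃ ρ : ℕ → CMConfig, ρ 0 = zeroConfig p.2.1 ∧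
    (∀ n, CMStep p.1 (ρ n) (ρ (n+1))) ∧ ∀ n, ∃ m, n ≤ m ∧ (ρ m).1 = p.2.2

/-- LCM reachability: the machine has a lossy run starting with `⟨q₀,𝟎⟩`
reaching `q_r`. -/
def LCMReach : CMDesc × ℕ × ℕ → Prop := fun p =>
  CMWF p.1 ∧ ∃ (B : ℕ) (ρ : ℕ → CMConfig), ρ 0 = zeroConfig p.2.1 ∧
    (∀ n, n < B → CMStepLossy p.1 (ρ n) (ρ (n+1))) ∧ (ρ B).1 = p.2.2

/-- LCM ω-reachability: for every `k`, the machine has a lossy run starting with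
`⟨q₀,𝟎⟩` visiting `q_r` at least `k` times. -/
def LCMOmegaReach : CMDesc × ℕ × ℕ → Prop := fun p =>
  CMWF p.1 ∧ ∀ k : ℕ, ∃ (B : ℕ) (ρ : ℕ → CMConfig), ρ 0 = zeroConfig p.2.1 ∧
    (∀ n, n < B → CMStepLossy p.1 (ρ n) (ρ (n+1))) ∧
    k ≤ ((Finset.range (B+1)).filter (fun n => (ρ n).1 = p.2.2)).card

/-! ## Particular formulas used in the statements -/

/-- `□₁⁺□₀⁺(◇₀⊤ → □₁◇₀⊤) ∧ φ` (Prop. 2.4 of the paper). -/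
def diffDecForm (φ : BForm) : BForm :=
  BForm.and
    (BForm.boxP1 (BForm.boxP0
      (BForm.imp (BForm.dia0 BForm.top) (BForm.box1 (BForm.dia0 BForm.top))))) φ

/-- `D ∧ □₀^{≤n}□₁^{≤n}(◇₀D → D) ∧ φ^D`. -/
def decRelForm (d n : ℕ) (φ : BForm) : BForm :=
  BForm.and (BForm.var d)
    (BForm.and
      (BForm.boxLe0 n (BForm.boxLe1 n
        (BForm.imp (BForm.dia0 (BForm.var d)) (BForm.var d))))
      (BForm.relativize d φ))

/-- `D ∧ □₀^{≤n}□₁^{≤n}(D → □₀D) ∧ φ^D`. -/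
def expRelForm (d n : ℕ) (φ : BForm) : BForm :=
  BForm.and (BForm.var d)
    (BForm.and
      (BForm.boxLe0 n (BForm.boxLe1 n
        (BForm.imp (BForm.var d) (BForm.box0 (BForm.var d)))))
      (BForm.relativize d φ))

/-!
A product with a difference frame is a decreasing 2-frame with constant fibres, and it validates
`◇₀⊤ → □₁◇₀⊤`. Conversely, in a decreasing 2-frame with difference fibres this axiom, holding
everywhere in the part generated by the evaluation point, says that as soon as one element of a
fibre survives to a later point, every element of it does. Over a linear order with finite
intervals this forces the fibres to be constant on that part, which is then a generated subframe
of a product with a difference frame.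
-/

section Semantics

open BForm

variable {W : Type} {R0 R1 : W → W → Prop} {val : ℕ → W → Prop} {w : W} {φ ψ : BForm}

@[simp]
theorem bsat_imp : BSat R0 R1 val w (imp φ ψ) ↔ (BSat R0 R1 val w φ → BSat R0 R1 val w ψ) := by
  simp [imp, BSat]

@[simp]
theorem bsat_top : BSat R0 R1 val w top := fun h => h.2 h.1

@[simp]
theorem bsat_box1 : BSat R0 R1 val w (box1 φ) ↔ ∀ v, R1 w v → BSat R0 R1 val v φ := by
  simp [box1, BSat]

@[simp]
theorem bsat_boxP0 :
    BSat R0 R1 val w (boxP0 φ) ↔ BSat R0 R1 val w φ ∧ ∀ v, R0 w v → BSat R0 R1 val v φ := by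
  simp [boxP0, box0, BSat]

@[simp]
theorem bsat_boxP1 :
    BSat R0 R1 val w (boxP1 φ) ↔ BSat R0 R1 val w φ ∧ ∀ v, R1 w v → BSat R0 R1 val v φ := by
  simp [boxP1, BSat]

end Semantics

section Bisimulation

variable {W W' : Type}

def Zigzag (R : W → W → Prop) (R' : W' → W' → Prop) (Z : W → W' → Prop) : Prop :=
  ∀ w w', Z w w' →
    (∀ v, R w v → ∃ v', R' w' v' ∧ Z v v') ∧ (∀ v', R' w' v' → ∃ v, R w v ∧ Z v v')

theorem Zigzag.exists_rel_iff {R : W → W → Prop} {R' : W' → W' → Prop} {Z : W → W' → Prop}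
    (hZ : Zigzag R R' Z) {P : W → Prop} {P' : W' → Prop} (hP : ∀ v v', Z v v' → (P v ↔ P' v'))
    {w : W} {w' : W'} (hw : Z w w') :
    (∃ v, R w v ∧ P v) ↔ ∃ v', R' w' v' ∧ P' v' := by
  constructor
  · rintro ⟨v, hwv, hv⟩
    obtain ⟨v', hwv', hvv'⟩ := (hZ w w' hw).1 v hwv
    exact ⟨v', hwv', (hP v v' hvv').1 hv⟩
  · rintro ⟨v', hwv', hv'⟩
    obtain ⟨v, hwv, hvv'⟩ := (hZ w w' hw).2 v' hwv'
    exact ⟨v, hwv, (hP v v' hvv').2 hv'⟩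

theorem bsat_iff_of_zigzag {R0 R1 : W → W → Prop} {R0' R1' : W' → W' → Prop}
    {val : ℕ → W → Prop} {val' : ℕ → W' → Prop} {Z : W → W' → Prop}
    (hval : ∀ w w', Z w w' → ∀ n, val n w ↔ val' n w')
    (h0 : Zigzag R0 R0' Z) (h1 : Zigzag R1 R1' Z) (φ : BForm) {w : W} {w' : W'}
    (hw : Z w w') : BSat R0 R1 val w φ ↔ BSat R0' R1' val' w' φ := by
  induction φ generalizing w w' with
  | var n => exact hval w w' hw n
  | neg φ ih => exact not_congr (ih hw)
  | and φ ψ ihφ ihψ => exact and_congr (ihφ hw) (ihψ hw)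
  | dia0 φ ih => exact h0.exists_rel_iff (fun v v' hv => ih hv) hw
  | dia1 φ ih => exact h1.exists_rel_iff (fun v v' hv => ih hv) hw

end Bisimulation

section Products

open BForm

def diffAx : BForm := imp (dia0 top) (box1 (dia0 top))

theorem bsat_diffAx_prod {A B : Type} {R : A → A → Prop} {S : B → B → Prop}
    {val : ℕ → A × B → Prop} (p : A × B) : BSat (prodR0 R) (prodR1 S) val p diffAx := by
  simp only [diffAx, bsat_imp, bsat_box1]
  rintro ⟨q, ⟨hpq, -⟩, -⟩ p' ⟨hp', -⟩
  exact ⟨(q.1, p'.2), ⟨hp' ▸ hpq, rfl⟩, bsat_top⟩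

theorem ProdSat.diffDecForm {A B : Type} {R : A → A → Prop} {S : B → B → Prop} {φ : BForm}
    (h : ProdSat R S φ) : ProdSat R S (diffDecForm φ) := by
  obtain ⟨val, p, hp⟩ := h
  refine ⟨val, p, ⟨?_, hp⟩⟩
  simp only [bsat_boxP1, bsat_boxP0]
  exact ⟨⟨bsat_diffAx_prod p, fun q _ => bsat_diffAx_prod q⟩,
    fun q _ => ⟨bsat_diffAx_prod q, fun r _ => bsat_diffAx_prod r⟩⟩

end Products

section Orders

variable {α : Type}

def HasFiniteIntervals (R : α → α → Prop) : Prop :=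
  ∀ x y, {z | R x z ∧ R z y}.Finite

def cone (R : α → α → Prop) (x₀ : α) : Set α := {x | x = x₀ ∨ R x₀ x}

theorem cone_closed {R : α → α → Prop} (htr : ∀ x y z, R x y → R y z → R x z) {x₀ : α} :
    ∀ x ∈ cone R x₀, ∀ y, R x y → y ∈ cone R x₀ := by
  rintro x (rfl | hx) y hxy
  exacts [Or.inr hxy, Or.inr (htr _ _ _ hx hxy)]

theorem HasFiniteIntervals.of_finite [Finite α] (R : α → α → Prop) : HasFiniteIntervals R :=
  fun _ _ => Set.toFinite _

end Orders

theorem IsOmegaFrame.isLin {F : Frame} (h : IsOmegaFrame F) : IsLin F.R := by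
  obtain ⟨e, he⟩ := h
  simp only [IsLin, he, ← e.injective.eq_iff]
  exact ⟨fun _ => lt_irrefl _, fun _ _ _ => lt_trans, fun _ _ => lt_trichotomy _ _⟩

theorem IsOmegaFrame.hasFiniteIntervals {F : Frame} (h : IsOmegaFrame F) :
    HasFiniteIntervals F.R := by
  obtain ⟨e, he⟩ := h
  intro x y
  refine ((Set.finite_Ioo (e x) (e y)).preimage e.injective.injOn).subset ?_
  intro z hz
  simpa [he] using hz



namespace TwoFrame

/-- The product `F × ⟨D, S⟩` as a two-dimensional frame all of whose fibres are `⟨D, S⟩`. -/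
def ofProd (F : Frame) (D : Type) [Nonempty D] (S : D → D → Prop) : TwoFrame :=
  ⟨F.W, F.R, F.ne, D, fun _ => Set.univ, fun _ => S, fun _ => Set.univ_nonempty⟩

variable {F : Frame} {D : Type} [Nonempty D]

theorem ofProd_decreasing (S : D → D → Prop) : (ofProd F D S).Decreasing :=
  fun _ _ _ => ⟨subset_rfl, fun _ _ _ _ => Iff.rfl⟩

theorem ofProd_diffFibers : (ofProd F D (· ≠ ·)).DiffFibers :=
  fun _ _ _ _ _ => Iff.rfl

theorem sat_ofProd {S : D → D → Prop} {φ : BForm} (h : ProdSat F.R S φ) :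
    (ofProd F D S).Sat φ := by
  obtain ⟨val, p, hp⟩ := h
  have hzigzag {R : F.W × D → F.W × D → Prop} :
      Zigzag R (fun w w' : (ofProd F D S).Worlds => R w.1 w'.1) (fun p w => w.1 = p) := by
    rintro p ⟨_, _⟩ rfl
    exact ⟨fun q hq => ⟨⟨q, trivial⟩, hq, rfl⟩, fun ⟨q, _⟩ hq => ⟨q, hq, rfl⟩⟩
  exact ⟨fun n w => val n w.1, ⟨p, trivial⟩,
    (bsat_iff_of_zigzag (R0 := prodR0 F.R) (R1 := prodR1 S) (by rintro _ _ rfl _; rfl)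
      hzigzag hzigzag φ rfl).1 hp⟩
open BForm

variable {T : TwoFrame} {val : ℕ → T.Worlds → Prop} {ψ : BForm}

theorem bsat_of_bsat_boxP1 (hdiff : T.DiffFibers) {x : T.H} {u : T.V} {hu : u ∈ T.D x}
    (h : BSat T.Rh T.Rv val ⟨(x, u), hu⟩ (boxP1 ψ)) {v : T.V} (hv : v ∈ T.D x) :
    BSat T.Rh T.Rv val ⟨(x, v), hv⟩ ψ := by
  obtain ⟨hψ, hbox⟩ := bsat_boxP1.1 h
  by_cases huv : u = v
  · subst huv
    exact hψ
  · exact hbox _ ⟨rfl, (hdiff x u hu v hv).2 huv⟩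

theorem bsat_of_bsat_boxP0 {x₀ : T.H} {v : T.V} {hv : v ∈ T.D x₀}
    (h : BSat T.Rh T.Rv val ⟨(x₀, v), hv⟩ (boxP0 ψ)) {x : T.H} (hx : x ∈ cone T.R x₀)
    (hvx : v ∈ T.D x) : BSat T.Rh T.Rv val ⟨(x, v), hvx⟩ ψ := by
  obtain ⟨hψ, hbox⟩ := bsat_boxP0.1 h
  rcases hx with rfl | hx
  · exact hψ
  · exact hbox _ ⟨hx, rfl⟩

theorem bsat_of_bsat_boxP1_boxP0 (hdec : T.Decreasing) (hdiff : T.DiffFibers) {x₀ : T.H}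
    {v₀ : T.V} {hv₀ : v₀ ∈ T.D x₀} (h : BSat T.Rh T.Rv val ⟨(x₀, v₀), hv₀⟩ (boxP1 (boxP0 ψ)))
    {x : T.H} (hx : x ∈ cone T.R x₀) {v : T.V} (hv : v ∈ T.D x) :
    BSat T.Rh T.Rv val ⟨(x, v), hv⟩ ψ := by
  have hv₀ : v ∈ T.D x₀ := by
    rcases hx with rfl | hx
    exacts [hv, (hdec _ _ hx).1 hv]
  exact bsat_of_bsat_boxP0 (bsat_of_bsat_boxP1 hdiff h hv₀) hx hv

/-- Under `◇₀⊤ → □₁◇₀⊤`, once one element of the fibre over `x` lives on in some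
successor of `x`, every element of that fibre does. -/
theorem exists_rel_mem_of_bsat_diffAx (hdec : T.Decreasing) (hdiff : T.DiffFibers)
    {x y : T.H} (hxy : T.R x y)
    (hax : ∀ u (hu : u ∈ T.D x), BSat T.Rh T.Rv val ⟨(x, u), hu⟩ diffAx)
    {v : T.V} (hv : v ∈ T.D x) : ∃ z, T.R x z ∧ v ∈ T.D z := by
  obtain ⟨u, hu⟩ := T.Dne y
  have hux : u ∈ T.D x := (hdec x y hxy).1 hu
  by_cases huv : u = v
  · exact ⟨y, hxy, huv ▸ hu⟩
  have hsucc : BSat T.Rh T.Rv val ⟨(x, u), hux⟩ (dia0 top) :=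
    ⟨⟨(y, u), hu⟩, ⟨hxy, rfl⟩, bsat_top⟩
  have hbox := bsat_box1.1 (bsat_imp.1 (hax u hux) hsucc)
  obtain ⟨⟨⟨z, _⟩, hvz⟩, ⟨hxz, rfl⟩, -⟩ := hbox ⟨(x, v), hv⟩ ⟨rfl, (hdiff x u hux v hv).2 huv⟩
  exact ⟨z, hxz, hvz⟩

/-- Follow an element to a later point where it is still alive and induct on the size of the
interval left to cover. -/
theorem D_subset_of_rel (hlin : IsLin T.R) (hfin : HasFiniteIntervals T.R)
    (hdec : T.Decreasing) {U : Set T.H} (hU : ∀ x ∈ U, ∀ y, T.R x y → y ∈ U)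
    (hsurv : ∀ x ∈ U, ∀ y, T.R x y → ∀ v ∈ T.D x, ∃ z, T.R x z ∧ v ∈ T.D z)
    {x y : T.H} (hx : x ∈ U) (hxy : T.R x y) : T.D x ⊆ T.D y := by
  obtain ⟨hirr, htr, htri⟩ := hlin
  induction hn : {z | T.R x z ∧ T.R z y}.ncard using Nat.strong_induction_on generalizing x with
  | _ n ih =>
  intro v hv
  obtain ⟨z, hxz, hvz⟩ := hsurv x hx y hxy v hv
  rcases htri z y with hzy | rfl | hyz
  · have hlt : {w | T.R z w ∧ T.R w y}.ncard < n := by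
      rw [← hn]
      refine Set.ncard_lt_ncard ⟨fun w hw => ⟨htr _ _ _ hxz hw.1, hw.2⟩, fun h => ?_⟩ (hfin x y)
      exact hirr z (h ⟨hxz, hzy⟩).1
    exact ih _ hlt (hU x hx z hxz) hzy rfl hvz
  · exact hvz
  · exact (hdec y z hyz).1 hvz

theorem D_eq_of_bsat_diffAx (hlin : IsLin T.R) (hfin : HasFiniteIntervals T.R)
    (hdec : T.Decreasing) (hdiff : T.DiffFibers) {x₀ : T.H} {v₀ : T.V} {hv₀ : v₀ ∈ T.D x₀}
    (hax : BSat T.Rh T.Rv val ⟨(x₀, v₀), hv₀⟩ (boxP1 (boxP0 diffAx))) :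
    ∀ x ∈ cone T.R x₀, T.D x = T.D x₀ := by
  have hsurv : ∀ x ∈ cone T.R x₀, ∀ y, T.R x y → ∀ v ∈ T.D x, ∃ z, T.R x z ∧ v ∈ T.D z :=
    fun x hx y hxy v hv => exists_rel_mem_of_bsat_diffAx hdec hdiff hxy
      (fun u hu => bsat_of_bsat_boxP1_boxP0 hdec hdiff hax hx hu) hv
  rintro x (rfl | hx)
  · rfl
  · exact (hdec x₀ x hx).1.antisymm
      (D_subset_of_rel hlin hfin hdec (cone_closed hlin.2.1) hsurv (Or.inl rfl) hx)

/-- An `R`-closed part of a frame with difference fibres on which the fibres are all equal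
to `D₀` is a generated subframe of the product `⟨H, R⟩ × ⟨D₀, ≠⟩`. -/
theorem prodSat_of_D_eq (hdiff : T.DiffFibers) {U : Set T.H}
    (hU : ∀ x ∈ U, ∀ y, T.R x y → y ∈ U) {D₀ : Set T.V} (hD : ∀ x ∈ U, T.D x = D₀)
    {w : T.Worlds} (hw : w.1.1 ∈ U) {φ : BForm} (h : BSat T.Rh T.Rv val w φ) :
    ProdSat T.R (fun a b : D₀ => a ≠ b) φ := by
  let Z : T.H × D₀ → T.Worlds → Prop := fun p w => p.1 ∈ U ∧ w.1.1 = p.1 ∧ w.1.2 = p.2.1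
  have h0 : Zigzag (prodR0 T.R) T.Rh Z := by
    rintro ⟨x, a⟩ ⟨⟨x', v⟩, _⟩ ⟨hx, hx', hv⟩
    dsimp only at hx hx' hv
    subst x' v
    refine ⟨?_, ?_⟩
    · rintro ⟨y, b⟩ ⟨hxy, rfl⟩
      have hy := hU x hx y hxy
      exact ⟨⟨(y, a.1), (hD y hy).symm ▸ a.2⟩, ⟨hxy, rfl⟩, hy, rfl, rfl⟩
    · rintro ⟨⟨y, b⟩, hb⟩ ⟨hxy, rfl⟩
      exact ⟨(y, a), ⟨hxy, rfl⟩, hU x hx y hxy, rfl, rfl⟩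
  have h1 : Zigzag (prodR1 (fun a b : D₀ => a ≠ b)) T.Rv Z := by
    rintro ⟨x, a⟩ ⟨⟨x', v⟩, ha⟩ ⟨hx, hx', hv⟩
    dsimp only at hx hx' hv
    subst x' v
    refine ⟨?_, ?_⟩
    · rintro ⟨_, b⟩ ⟨rfl, hab⟩
      have hb : b.1 ∈ T.D x := (hD x hx).symm ▸ b.2
      exact ⟨⟨(x, b.1), hb⟩, ⟨rfl, (hdiff x _ ha _ hb).2 (Subtype.coe_ne_coe.2 hab)⟩, hx, rfl, rfl⟩
    · rintro ⟨⟨_, b⟩, hb⟩ ⟨rfl, hab⟩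
      refine ⟨(x, ⟨b, hD x hx ▸ hb⟩), ⟨rfl, fun h => ?_⟩, hx, rfl, rfl⟩
      exact (hdiff x _ ha _ hb).1 hab (congrArg Subtype.val h)
  have hval : ∀ p w, Z p w →
      ∀ n, (∃ h : p.2.1 ∈ T.D p.1, val n ⟨(p.1, p.2.1), h⟩) ↔ val n w := by
    rintro ⟨x, a⟩ ⟨⟨x', v⟩, _⟩ ⟨-, hx, hv⟩ n
    dsimp only at hx hv
    subst x' v
    exact ⟨fun ⟨_, h⟩ => h, fun h => ⟨_, h⟩⟩
  obtain ⟨⟨x, v⟩, hv⟩ := w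
  exact ⟨_, (x, ⟨v, hD x hw ▸ hv⟩), (bsat_iff_of_zigzag hval h0 h1 φ ⟨hw, rfl, rfl⟩).2 h⟩

end TwoFrame

/-- For `C` the singleton class `{⟨ω,<⟩}` or the class of all finite
linear orders: `φ` is satisfiable in a product of a member of `C` with a difference
frame iff `□₁⁺□₀⁺(◇₀⊤ → □₁◇₀⊤) ∧ φ` is satisfiable in a decreasing 2-frame with
horizontal frame in `C` and all vertical frames difference frames. -/
theorem prod_sat_iff_decreasing_sat (C : Frame → Prop)
    (hC : C = IsOmegaFrame ∨ C = IsFinLinFrame) (φ : BForm) :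
    ProdDiffSat C φ ↔ DecDiffSat C (diffDecForm φ) := by
  have hCprops : ∀ F, C F → IsLin F.R ∧ HasFiniteIntervals F.R := by
    rcases hC with rfl | rfl
    exacts [fun F hF => ⟨hF.isLin, hF.hasFiniteIntervals⟩,
      fun F ⟨_, hlin⟩ => ⟨hlin, .of_finite _⟩]
  constructor
  · rintro ⟨F, hF, D, _, hsat⟩
    exact ⟨.ofProd F D (· ≠ ·), hF, TwoFrame.ofProd_decreasing _, TwoFrame.ofProd_diffFibers,
      TwoFrame.sat_ofProd hsat.diffDecForm⟩
  · rintro ⟨T, hF, hdec, hdiff, val, ⟨⟨x₀, v₀⟩, hv₀⟩, hax, hφ⟩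
    obtain ⟨hlin, hfin⟩ := hCprops T.horiz hF
    exact ⟨T.horiz, hF, T.D x₀, ⟨⟨v₀, hv₀⟩⟩, TwoFrame.prodSat_of_D_eq hdiff
      (cone_closed hlin.2.1) (TwoFrame.D_eq_of_bsat_diffAx hlin hfin hdec hdiff hax)
      (Or.inl rfl) hφ⟩

end HK
end

section
/- Satisfiability over products of finite linear orders with difference frames has the finite product model property: for any bimodal formula φ, if φ is satisfied in some model based on a product frame ⟨T,<⟩ × ⟨W,≠⟩ with ⟨T,<⟩ a finite linear order and ⟨W,≠⟩ a (possibly infinite) difference frame, then φ is satisfied in some model based on a product frame ⟨T,<⟩ × ⟨W',≠⟩ with ⟨T,<⟩ a finite linear order and W' a finite nonempty set. -/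
namespace HK

/-! ### Auxiliary: subformulas -/

namespace BForm

def subf : BForm → List BForm
  | var n => [var n]
  | neg φ => neg φ :: subf φ
  | and φ ψ => and φ ψ :: (subf φ ++ subf ψ)
  | dia0 φ => dia0 φ :: subf φ
  | dia1 φ => dia1 φ :: subf φ

lemma mem_subf_self (φ : BForm) : φ ∈ subf φ := by
  cases φ <;> simp [subf]

end BForm

/-- The finite product model property: if `φ` is satisfied in a model
based on a product of a finite linear order with a (possibly infinite) difference
frame, then it is satisfied in a model based on a product of a finite linear order
with a finite difference frame. -/
theorem finite_product_model_property (φ : BForm)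
    (h : ∃ (T : Type) (R : T → T → Prop), Finite T ∧ IsLin R ∧
        ∃ D : Type, Nonempty D ∧ ProdSat R (fun a b : D => a ≠ b) φ) :
    ∃ (T : Type) (R : T → T → Prop), Finite T ∧ IsLin R ∧
      ∃ D : Type, Finite D ∧ Nonempty D ∧ ProdSat R (fun a b : D => a ≠ b) φ := by
  classical
  obtain ⟨T, R, hTfin, hlin, D, hDne, val, w, hsat⟩ := h
  -- the type space
  let Sub := {ψ : BForm // ψ ∈ BForm.subf φ}
  have hSubfin : Finite Sub := (BForm.subf φ).finite_toSet.to_subtype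
  let C := T → Sub → Prop
  have hCfin : Finite C := by exact Pi.finite
  let θ : D → C := fun a t ψ =>
    BSat (prodR0 R) (prodR1 (fun a b : D => a ≠ b)) val (t, a) ψ.1
  let a0 : D := w.2
  let c1 : C → D := fun c => if h : ∃ a, θ a = c then h.choose else a0
  let c2 : C → D := fun c => if h : ∃ a, θ a = c ∧ a ≠ c1 c then h.choose else a0
  let D' : Set D := ({a0} ∪ Set.range c1) ∪ Set.range c2
  have ha0 : a0 ∈ D' := Or.inl (Or.inl rfl)
  have hD'fin : D'.Finite :=
    ((Set.finite_singleton a0).union (Set.finite_range c1)).union (Set.finite_range c2)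
  -- witness selection
  have key : ∀ (a b : D), b ≠ a → ∃ b' ∈ D', b' ≠ a ∧ θ b' = θ b := by
    intro a b hba
    have h1 : ∃ x, θ x = θ b := ⟨b, rfl⟩
    have hc1 : θ (c1 (θ b)) = θ b := by
      show θ (if h : ∃ x, θ x = θ b then h.choose else a0) = θ b
      rw [dif_pos h1]; exact h1.choose_spec
    by_cases hne : c1 (θ b) ≠ a
    · exact ⟨c1 (θ b), Or.inl (Or.inr ⟨θ b, rfl⟩), hne, hc1⟩
    · push_neg at hne
      have h2 : ∃ x, θ x = θ b ∧ x ≠ c1 (θ b) := ⟨b, rfl, by rw [hne]; exact hba⟩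
      have hc2 : θ (c2 (θ b)) = θ b ∧ c2 (θ b) ≠ c1 (θ b) := by
        show (fun y => θ y = θ b ∧ y ≠ c1 (θ b))
            (if h : ∃ x, θ x = θ b ∧ x ≠ c1 (θ b) then h.choose else a0)
        rw [dif_pos h2]; exact h2.choose_spec
      exact ⟨c2 (θ b), Or.inr ⟨θ b, rfl⟩, by rw [← hne]; exact hc2.2, hc2.1⟩
  -- the restricted model
  let val' : ℕ → T × ↥D' → Prop := fun n p => val n (p.1, p.2.1)
  -- truth lemma
  have truth : ∀ ψ : BForm, BForm.subf ψ ⊆ BForm.subf φ → ∀ (t : T) (a : D) (ha : a ∈ D'),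
      (BSat (prodR0 R) (prodR1 (fun x y : ↥D' => x ≠ y)) val' (t, ⟨a, ha⟩) ψ ↔
       BSat (prodR0 R) (prodR1 (fun x y : D => x ≠ y)) val (t, a) ψ) := by
    intro ψ
    induction ψ with
    | var n => intro _ t a ha; exact Iff.rfl
    | neg ψ ih =>
      intro hs t a ha
      have hψ : BForm.subf ψ ⊆ BForm.subf φ :=
        fun x hx => hs (List.mem_cons_of_mem _ hx)
      exact not_congr (ih hψ t a ha)
    | and ψ χ ihψ ihχ =>
      intro hs t a ha
      have hψ : BForm.subf ψ ⊆ BForm.subf φ :=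
        fun x hx => hs (List.mem_cons_of_mem _ (List.mem_append_left _ hx))
      have hχ : BForm.subf χ ⊆ BForm.subf φ :=
        fun x hx => hs (List.mem_cons_of_mem _ (List.mem_append_right _ hx))
      exact and_congr (ihψ hψ t a ha) (ihχ hχ t a ha)
    | dia0 ψ ih =>
      intro hs t a ha
      have hψ : BForm.subf ψ ⊆ BForm.subf φ :=
        fun x hx => hs (List.mem_cons_of_mem _ hx)
      constructor
      · rintro ⟨⟨t', b⟩, ⟨hR, hb⟩, hsb⟩
        refine ⟨(t', a), ⟨hR, rfl⟩, ?_⟩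
        have hb' : b = ⟨a, ha⟩ := hb.symm
        subst hb'
        exact (ih hψ t' a ha).mp hsb
      · rintro ⟨⟨t', b⟩, ⟨hR, hb⟩, hsb⟩
        have hb' : b = a := hb.symm
        subst hb'
        exact ⟨(t', ⟨b, ha⟩), ⟨hR, rfl⟩, (ih hψ t' b ha).mpr hsb⟩
    | dia1 ψ ih =>
      intro hs t a ha
      have hψ : BForm.subf ψ ⊆ BForm.subf φ :=
        fun x hx => hs (List.mem_cons_of_mem _ hx)
      have hψmem : ψ ∈ BForm.subf φ := hψ (BForm.mem_subf_self ψ)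
      constructor
      · rintro ⟨⟨t', b⟩, ⟨ht, hne⟩, hsb⟩
        refine ⟨(t', b.1), ⟨ht, fun e => hne (Subtype.ext e)⟩, (ih hψ t' b.1 b.2).mp hsb⟩
      · rintro ⟨⟨t', b⟩, ⟨ht, hne⟩, hsb⟩
        obtain ⟨b', hb'D, hb'ne, hθ⟩ := key a b (Ne.symm hne)
        have heq : θ b' t' ⟨ψ, hψmem⟩ = θ b t' ⟨ψ, hψmem⟩ := by rw [hθ]
        have hsb' : BSat (prodR0 R) (prodR1 (fun x y : D => x ≠ y)) val (t', b') ψ :=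
          cast heq.symm hsb
        refine ⟨(t', ⟨b', hb'D⟩), ⟨ht, fun e => hb'ne ?_⟩, (ih hψ t' b' hb'D).mpr hsb'⟩
        exact (congrArg Subtype.val e).symm
  refine ⟨T, R, hTfin, hlin, ↥D', hD'fin.to_subtype, ⟨⟨a0, ha0⟩⟩,
    val', (w.1, ⟨a0, ha0⟩), ?_⟩
  have := (truth φ (fun x hx => hx) w.1 a0 ha0).mpr
  apply this
  exact hsat


end HK
end
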